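/- Let G = (V, E) be a finite simple graph and let A_s, A_t ⊆ V be independent offensive alliances with |A_s| = |A_t| = k. Then there exists an independent-offensive-alliance TJ sequence from A_s to A_t if and only if there exists an independent-offensive-alliance TAR sequence from A_s to A_t with threshold k + 1. -/

import Mathlib

open Finset

variable {V : Type*}

section Defs

variable [Fintype V] [DecidableEq V] (G : SimpleGraph V) [DecidableRel G.Adj]

/-- `NbrsIn G A v` is the number of neighbors of `v` lying in `A` (denoted `d_A(v)`). -/
def NbrsIn (A : Finset V) (v : V) : ℕ := (A.filter (fun u => G.Adj v u)).card

/-- The boundary `∂A = N(A) ∖ A`: vertices outside `A` with a neighbor in `A`. -/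
def Bdry (A : Finset V) : Finset V :=
  Finset.univ.filter (fun v => v ∉ A ∧ ∃ u ∈ A, G.Adj v u)

/-- `A` is a defensive alliance: `d_A(v) + 1 ≥ d_{V∖A}(v)` for every `v ∈ A`. -/
def DefAll (A : Finset V) : Prop := ∀ v ∈ A, NbrsIn G A v + 1 ≥ NbrsIn G Aᶜ v

/-- `A` is an offensive alliance: `d_A(v) ≥ d_{V∖A}(v) + 1` for every `v ∈ ∂A`. -/
def OffAll (A : Finset V) : Prop := ∀ v ∈ Bdry G A, NbrsIn G A v ≥ NbrsIn G Aᶜ v + 1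

/-- `A` is a powerful alliance: both a defensive and an offensive alliance. -/
def PowAll (A : Finset V) : Prop := DefAll G A ∧ OffAll G A

/-- `A` is a dominating set: every vertex is in `A` or has a neighbor in `A`. -/
def DomSet (A : Finset V) : Prop := ∀ v : V, v ∈ A ∨ ∃ u ∈ A, G.Adj v u

/-- `A` is an independent set. -/
def IndSet (A : Finset V) : Prop := ∀ u ∈ A, ∀ w ∈ A, ¬ G.Adj u w

/-- The set of leaves (vertices of degree one) of `G`. -/
def Leaves : Finset V := Finset.univ.filter (fun v => G.degree v = 1)

/-- `Z(X) = {v ∈ V ∖ N[X] : N(v) ⊆ L ∪ ∂X}`. -/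
def ZSet (X : Finset V) : Finset V :=
  Finset.univ.filter (fun v => v ∉ X ∧ (∀ u ∈ X, ¬ G.Adj v u) ∧
    G.neighborFinset v ⊆ Leaves G ∪ Bdry G X)

/-- `Y(X) = N[X] ∪ Z(X) ∪ L`. -/
def YSet (X : Finset V) : Finset V := (X ∪ Bdry G X) ∪ ZSet G X ∪ Leaves G

/-- Global independent offensive alliance: offensive alliance that is dominating and independent. -/
def GIOA (A : Finset V) : Prop := OffAll G A ∧ DomSet G A ∧ IndSet G A

end Defs

/-- The induced subgraph `G^{≤r}` on vertices of degree at most `r` (modelled as a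
graph on all of `V` whose edges are the edges of `G` with both endpoints of degree `≤ r`). -/
def GLE [Fintype V] (G : SimpleGraph V) [DecidableRel G.Adj] (r : ℕ) : SimpleGraph V where
  Adj u w := G.Adj u w ∧ G.degree u ≤ r ∧ G.degree w ≤ r
  symm := ⟨fun u w h => ⟨h.1.symm, h.2.2, h.2.1⟩⟩
  loopless := ⟨fun u h => G.irrefl h.1⟩

section Steps

variable [DecidableEq V]

/-- Token jumping step: `|A| = |B|` and `|A ∖ B| = 1`. -/
def TJStep (A B : Finset V) : Prop := A.card = B.card ∧ (A \ B).card = 1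

/-- Token addition step: `A ⊆ B` and `|B ∖ A| = 1`. -/
def TAStep (A B : Finset V) : Prop := A ⊆ B ∧ (B \ A).card = 1

/-- Token removal step: `B ⊆ A` and `|A ∖ B| = 1`. -/
def TRStep (A B : Finset V) : Prop := B ⊆ A ∧ (A \ B).card = 1

/-- Token addition/removal (TAR) step. -/
def TARStep (A B : Finset V) : Prop := TAStep A B ∨ TRStep A B

/-- `f 0, f 1, …, f (n-1)` is a reconfiguration sequence (with `n` members, i.e. of
length `n`) from `A` to `B` for step relation `step`, all of whose members satisfy `X`. -/
def SeqOn (step : Finset V → Finset V → Prop) (X : Finset V → Prop)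
    (f : ℕ → Finset V) (A B : Finset V) (n : ℕ) : Prop :=
  1 ≤ n ∧ f 0 = A ∧ f (n - 1) = B ∧
    (∀ i, i + 1 < n → step (f i) (f (i + 1))) ∧ (∀ i, i < n → X (f i))

/-- There is an `X`-`step` reconfiguration sequence of length `n` from `A` to `B`. -/
def IsSeq (step : Finset V → Finset V → Prop) (X : Finset V → Prop)
    (A B : Finset V) (n : ℕ) : Prop :=
  ∃ f : ℕ → Finset V, SeqOn step X f A B n

/-- `X` is reconfiguration monotone increasing (rmi). -/
def Rmi (X : Finset V → Prop) : Prop :=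
  ∀ A B : Finset V, X A → X B → TJStep A B → ∀ v ∈ B \ A, X (insert v A)

/-- `X` is reconfiguration monotone decreasing (rmd). -/
def Rmd (X : Finset V → Prop) : Prop :=
  ∀ A B : Finset V, X A → X B → TJStep A B → ∀ v ∈ A \ B, X (A.erase v)

end Steps

/-!
A TJ move `C → C - u + w` between independent offensive alliances splits into two TAR moves
through `C + w`: offensive alliances are closed under union, and `C + w` stays independent unless
`u ~ w`. If `u ~ w`, the offensive conditions at `w` (for `C`) and at `u` (for `C - u + w`) force
`uw` to be an isolated edge, and the detour goes through `C - u` instead.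

Conversely, along a TAR sequence with threshold `k + 1` we keep a `k`-set `C`, TJ-reachable from
the start, from which the current set is obtained by a chain of removals or by one addition. An
addition at the bottom of such a chain is commuted upwards past each removal by the same two
exchange facts, until at the top it turns into a TJ move of `C`.
-/

open Relation

section StepLemmas

variable [DecidableEq V] {A B : Finset V} {u w : V}

lemma taStep_iff : TAStep A B ↔ ∃ w ∉ A, B = insert w A := by
  simp only [TAStep, eq_comm (a := B), exists_eq_insert_iff]
  constructor
  · rintro ⟨hAB, h⟩
    refine ⟨hAB, ?_⟩
    have := card_le_card hAB
    rw [card_sdiff_of_subset hAB] at h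
    omega
  · rintro ⟨hAB, h⟩
    exact ⟨hAB, by rw [card_sdiff_of_subset hAB]; omega⟩

lemma trStep_iff : TRStep A B ↔ ∃ u ∈ A, B = A.erase u := by
  rw [TRStep, ← TAStep, taStep_iff]
  constructor
  · rintro ⟨u, hu, rfl⟩
    exact ⟨u, mem_insert_self u B, (erase_insert hu).symm⟩
  · rintro ⟨u, hu, rfl⟩
    exact ⟨u, notMem_erase u A, (insert_erase hu).symm⟩

lemma tjStep_iff : TJStep A B ↔ ∃ u ∈ A, ∃ w ∉ A, B = insert w (A.erase u) := by
  constructor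
  · rintro ⟨hcard, hdiff⟩
    obtain ⟨u, hu⟩ := card_eq_one.mp hdiff
    have huA : u ∈ A := (mem_sdiff.mp (hu ▸ mem_singleton_self u)).1
    have huB : u ∉ B := (mem_sdiff.mp (hu ▸ mem_singleton_self u)).2
    have hsub : A.erase u ⊆ B := fun x hx => by
      by_contra hxB
      have : x ∈ A \ B := mem_sdiff.mpr ⟨mem_of_mem_erase hx, hxB⟩
      exact ne_of_mem_erase hx (by simpa [hu] using this)
    have hcard' : (A.erase u).card + 1 = B.card := by
      rw [card_erase_add_one huA, hcard]
    obtain ⟨w, hw, rfl⟩ := exists_eq_insert_iff.mpr ⟨hsub, hcard'⟩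
    refine ⟨u, huA, w, fun hwA => hw ?_, rfl⟩
    have hwu : w ≠ u := by rintro rfl; exact huB (mem_insert_self _ _)
    exact mem_erase.mpr ⟨hwu, hwA⟩
  · rintro ⟨u, hu, w, hw, rfl⟩
    have hwu : w ∉ A.erase u := fun h => hw (mem_of_mem_erase h)
    refine ⟨by rw [card_insert_of_notMem hwu, card_erase_add_one hu], ?_⟩
    rw [card_eq_one]
    refine ⟨u, Finset.ext fun x => ?_⟩
    by_cases hx : x = u <;> simp only [mem_sdiff, mem_insert, mem_erase,
      mem_singleton, hx] <;> grind

lemma taStep_insert (hw : w ∉ A) : TAStep A (insert w A) := taStep_iff.mpr ⟨w, hw, rfl⟩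

lemma trStep_erase (hu : u ∈ A) : TRStep A (A.erase u) := trStep_iff.mpr ⟨u, hu, rfl⟩

lemma tjStep_insert_erase (hu : u ∈ A) (hw : w ∉ A) : TJStep A (insert w (A.erase u)) :=
  tjStep_iff.mpr ⟨u, hu, w, hw, rfl⟩

lemma trStep_insert_erase (hu : u ∈ A) (hwu : w ≠ u) :
    TRStep (insert w A) (insert w (A.erase u)) :=
  erase_insert_of_ne hwu ▸ trStep_erase (mem_insert_of_mem hu)

lemma TAStep.card_eq (h : TAStep A B) : B.card = A.card + 1 := by
  obtain ⟨w, hw, rfl⟩ := taStep_iff.mp h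
  exact card_insert_of_notMem hw

end StepLemmas

section Sequences

def StepWithin (step : Finset V → Finset V → Prop) (X : Finset V → Prop)
    (S T : Finset V) : Prop :=
  step S T ∧ X S ∧ X T

variable {step : Finset V → Finset V → Prop} {X : Finset V → Prop}

lemma isSeq_iff_reflTransGen {A B : Finset V} :
    (∃ n, IsSeq step X A B n) ↔ X A ∧ ReflTransGen (StepWithin step X) A B := by
  constructor
  · rintro ⟨n, f, hn, rfl, rfl, hstep, hX⟩
    have reach : ∀ i < n, ReflTransGen (StepWithin step X) (f 0) (f i) := by
      intro i
      induction i with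
      | zero => exact fun _ => ReflTransGen.refl
      | succ i ih =>
        exact fun hi => (ih (by omega)).tail ⟨hstep i hi, hX i (by omega), hX (i + 1) hi⟩
    exact ⟨hX 0 (by omega), reach (n - 1) (by omega)⟩
  · rintro ⟨hA, hAB⟩
    induction hAB with
    | refl => exact ⟨1, fun _ => A, le_rfl, rfl, rfl, by omega, fun _ _ => hA⟩
    | @tail C D _ hCD ih =>
      obtain ⟨n, f, hn, h0, hlast, hstep, hX⟩ := ih
      refine ⟨n + 1, fun i => if i < n then f i else D, by omega,
        by simp [show 0 < n by omega, h0], by simp, fun i hi => ?_, fun i hi => ?_⟩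
      · by_cases hin : i + 1 < n
        · simpa [hin, show i < n by omega] using hstep i hin
        · obtain rfl : i = n - 1 := by omega
          simpa [show n - 1 < n by omega, Nat.sub_add_cancel hn, hlast] using hCD.1
      · by_cases hin : i < n
        · simpa [hin] using hX i hin
        · simpa [hin] using hCD.2.2

lemma StepWithin.of_reflTransGen {A B : Finset V} (h : ReflTransGen (StepWithin step X) A B)
    (hA : X A) : X B := by
  rcases h.cases_tail with rfl | ⟨_, _, hCB⟩
  · exact hA
  · exact hCB.2.2

lemma card_eq_of_reflTransGen_tjStep [DecidableEq V] {A B : Finset V}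
    (h : ReflTransGen (StepWithin TJStep X) A B) : B.card = A.card := by
  induction h with
  | refl => rfl
  | tail _ hCD ih => exact hCD.1.1.symm.trans ih

lemma subset_of_reflTransGen_trStep [DecidableEq V] {A B : Finset V}
    (h : ReflTransGen (StepWithin TRStep X) A B) : B ⊆ A := by
  induction h with
  | refl => exact subset_rfl
  | tail _ hCD ih => exact hCD.1.1.trans ih

end Sequences

section Independence

variable [DecidableEq V] {G : SimpleGraph V} {A : Finset V} {w : V}

lemma indSet_insert_iff : IndSet G (insert w A) ↔ IndSet G A ∧ ∀ y ∈ A, ¬ G.Adj w y := by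
  constructor
  · intro h
    exact ⟨fun a ha b hb => h a (mem_insert_of_mem ha) b (mem_insert_of_mem hb),
      fun y hy => h w (mem_insert_self w A) y (mem_insert_of_mem hy)⟩
  · rintro ⟨hA, hw⟩ a ha b hb
    rcases mem_insert.mp ha with rfl | haA
    · rcases mem_insert.mp hb with rfl | hbA
      · exact G.irrefl
      · exact hw b hbA
    · rcases mem_insert.mp hb with rfl | hbA
      · exact fun h => hw a haA h.symm
      · exact hA a haA b hbA

end Independence

section Alliances

variable {G : SimpleGraph V} [DecidableRel G.Adj] {A B : Finset V} {u w : V}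

lemma nbrsIn_mono (h : A ⊆ B) (v : V) : NbrsIn G A v ≤ NbrsIn G B v :=
  card_le_card (filter_subset_filter _ h)

variable [DecidableEq V]

lemma nbrsIn_insert_of_not_adj {v : V} (h : ¬ G.Adj v u) :
    NbrsIn G (insert u A) v = NbrsIn G A v := by
  rw [NbrsIn, filter_insert, if_neg h, NbrsIn]

lemma nbrsIn_erase_of_not_adj {v : V} (h : ¬ G.Adj v u) :
    NbrsIn G (A.erase u) v = NbrsIn G A v := by
  rw [NbrsIn, filter_erase, erase_eq_of_notMem (by simp [h]), NbrsIn]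

variable [Fintype V]

variable (G) in
abbrev IndOffAll (A : Finset V) : Prop := OffAll G A ∧ IndSet G A

lemma mem_bdry {v : V} : v ∈ Bdry G A ↔ v ∉ A ∧ ∃ u ∈ A, G.Adj v u := by
  simp [Bdry]

lemma OffAll.union (hA : OffAll G A) (hB : OffAll G B) : OffAll G (A ∪ B) := by
  have bound : ∀ {C}, OffAll G C → C ⊆ A ∪ B → ∀ x ∈ Bdry G C,
      NbrsIn G (A ∪ B) x ≥ NbrsIn G (A ∪ B)ᶜ x + 1 := fun hC hsub x hx =>
    have := hC x hx
    have := nbrsIn_mono (G := G) hsub x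
    have := nbrsIn_mono (G := G) (compl_subset_compl.mpr hsub) x
    by omega
  intro x hx
  obtain ⟨hxAB, y, hy, hxy⟩ := mem_bdry.mp hx
  rw [mem_union, not_or] at hxAB
  rcases mem_union.mp hy with hyA | hyB
  · exact bound hA subset_union_left x (mem_bdry.mpr ⟨hxAB.1, y, hyA, hxy⟩)
  · exact bound hB subset_union_right x (mem_bdry.mpr ⟨hxAB.2, y, hyB, hxy⟩)

/-- The remaining boundary vertices are not adjacent to `u`, so their counts do not change. -/
lemma OffAll.erase (hA : OffAll G A) (hu : ∀ y ∈ A, ¬ G.Adj u y)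
    (hpriv : ∀ x, G.Adj u x → ∀ y ∈ A, G.Adj x y → y = u) : OffAll G (A.erase u) := by
  intro x hx
  obtain ⟨hxA', y, hy, hxy⟩ := mem_bdry.mp hx
  have hyA := mem_of_mem_erase hy
  have hxu : x ≠ u := by rintro rfl; exact hu y hyA hxy
  have hxA : x ∉ A := fun h => hxA' (mem_erase.mpr ⟨hxu, h⟩)
  have hnadj : ¬ G.Adj x u := fun h => ne_of_mem_erase hy (hpriv x h.symm y hyA hxy)
  rw [nbrsIn_erase_of_not_adj hnadj, compl_erase, nbrsIn_insert_of_not_adj hnadj]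
  exact hA x (mem_bdry.mpr ⟨hxA, y, hyA, hxy⟩)

/-- `d_A(w) ≤ 1` and the offensive condition at `w` force `d_{V∖A}(w) = 0`. -/
lemma OffAll.eq_of_adj (hA : OffAll G A) (hw : w ∉ A) (hu : u ∈ A) (hwu : G.Adj w u)
    (honly : ∀ y ∈ A, G.Adj w y → y = u) {x : V} (hwx : G.Adj w x) : x = u := by
  have hin : NbrsIn G A w ≤ 1 :=
    (card_le_card fun y hy => mem_singleton.mpr
      (honly y (mem_filter.mp hy).1 (mem_filter.mp hy).2)).trans_eq
      (card_singleton u)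
  have hout : NbrsIn G Aᶜ w = 0 := by
    have := hA w (mem_bdry.mpr ⟨hw, u, hu, hwu⟩)
    omega
  have hxA : x ∈ A := by
    by_contra hxA
    exact card_ne_zero_of_mem (mem_filter.mpr ⟨mem_compl.mpr hxA, hwx⟩) hout
  exact honly x hxA hwx

end Alliances

section Exchange

variable [Fintype V] [DecidableEq V] {G : SimpleGraph V} [DecidableRel G.Adj]
  {A : Finset V} {u w : V}

lemma IndOffAll.insert_of_exchange (hA : IndOffAll G A)
    (hB : IndOffAll G (insert w (A.erase u))) (huw : ¬ G.Adj u w) :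
    IndOffAll G (insert w A) := by
  have hunion : A ∪ insert w (A.erase u) = insert w A := by
    rw [union_insert, union_eq_left.mpr (erase_subset u A)]
  refine ⟨hunion ▸ hA.1.union hB.1, indSet_insert_iff.mpr ⟨hA.2, fun y hy hwy => ?_⟩⟩
  by_cases hyu : y = u
  · exact huw (hyu ▸ hwy.symm)
  · exact (indSet_insert_iff.mp hB.2).2 y (mem_erase.mpr ⟨hyu, hy⟩) hwy

lemma IndOffAll.isolatedEdge_of_exchange (hA : IndOffAll G A)
    (hB : IndOffAll G (insert w (A.erase u))) (hu : u ∈ A) (hw : w ∉ A) (huw : G.Adj u w) :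
    (∀ x, G.Adj u x → x = w) ∧ ∀ x, G.Adj w x → x = u := by
  have hwu : w ≠ u := fun h => hw (h ▸ hu)
  have huB : u ∉ insert w (A.erase u) := by simp [hwu.symm]
  refine ⟨fun x hux => hB.1.eq_of_adj huB (mem_insert_self w _) huw ?_ hux,
    fun x hwx => hA.1.eq_of_adj hw hu huw.symm ?_ hwx⟩
  · intro y hy huy
    by_contra hyw
    have hyA := mem_of_mem_erase ((mem_insert.mp hy).resolve_left hyw)
    exact hA.2 u hu y hyA huy
  · intro y hy hwy
    by_contra hyu
    exact (indSet_insert_iff.mp hB.2).2 y (mem_erase.mpr ⟨hyu, hy⟩) hwy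

lemma IndOffAll.erase_of_isolatedEdge (hA : IndOffAll G A) (hu : u ∈ A)
    (hu' : ∀ x, G.Adj u x → x = w) (hw' : ∀ x, G.Adj w x → x = u) :
    IndOffAll G (A.erase u) :=
  ⟨hA.1.erase (fun y hy => hA.2 u hu y hy) fun x hux y _ hxy => hw' y (hu' x hux ▸ hxy),
    fun a ha b hb => hA.2 a (mem_of_mem_erase ha) b (mem_of_mem_erase hb)⟩

end Exchange

section Reconfiguration

variable [Fintype V] [DecidableEq V] {G : SimpleGraph V} [DecidableRel G.Adj] {k : ℕ}

variable (G) in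
abbrev IndOffAllUpTo (t : ℕ) (S : Finset V) : Prop := IndOffAll G S ∧ S.card ≤ t

lemma reflTransGen_tar_of_tjStep {C D : Finset V} (h : StepWithin TJStep (IndOffAll G) C D)
    (hC : C.card = k) : ReflTransGen (StepWithin TARStep (IndOffAllUpTo G (k + 1))) C D := by
  obtain ⟨hCD, hXC, hXD⟩ := h
  have hDk : D.card = k := hCD.1 ▸ hC
  obtain ⟨u, hu, w, hw, rfl⟩ := tjStep_iff.mp hCD
  have hwu : w ≠ u := fun h => hw (h ▸ hu)
  by_cases huw : G.Adj u w
  · obtain ⟨hu', hw'⟩ := hXC.isolatedEdge_of_exchange hXD hu hw huw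
    have hM := hXC.erase_of_isolatedEdge hu hu' hw'
    have hMk : (C.erase u).card ≤ k + 1 := (card_erase_le).trans (by omega)
    refine .tail (.single ⟨Or.inr (trStep_erase hu), ⟨hXC, by omega⟩, hM, hMk⟩)
      ⟨Or.inl (taStep_insert fun h => hw (mem_of_mem_erase h)), ⟨hM, hMk⟩, hXD, by omega⟩
  · have hM := hXC.insert_of_exchange hXD huw
    have hMk : (insert w C).card ≤ k + 1 := (card_insert_le w C).trans (by omega)
    exact .tail (.single ⟨Or.inl (taStep_insert hw), ⟨hXC, by omega⟩, hM, hMk⟩)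
      ⟨Or.inr (trStep_insert_erase hu hwu), ⟨hM, hMk⟩, hXD, by omega⟩

lemma reflTransGen_tar_of_reflTransGen_tj {A B : Finset V} (hA : A.card = k)
    (h : ReflTransGen (StepWithin TJStep (IndOffAll G)) A B) :
    ReflTransGen (StepWithin TARStep (IndOffAllUpTo G (k + 1))) A B := by
  induction h with
  | refl => exact .refl
  | tail hAC hCD ih =>
    exact ih.trans
      (reflTransGen_tar_of_tjStep hCD ((card_eq_of_reflTransGen_tjStep hAC).trans hA))

lemma exists_tj_removals_to_insert {A P : Finset V}
    (hAP : ReflTransGen (StepWithin TRStep (IndOffAll G)) A P) :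
    ∀ {S : Finset V} {w : V}, StepWithin TRStep (IndOffAll G) P S → w ∉ S →
      IndOffAll G (insert w S) → ∃ A', ReflTransGen (StepWithin TJStep (IndOffAll G)) A A' ∧
        ReflTransGen (StepWithin TRStep (IndOffAll G)) A' (insert w S) := by
  induction hAP with
  | refl =>
    rintro S w ⟨hPS, hXA, -⟩ hw hXw
    obtain ⟨u, hu, rfl⟩ := trStep_iff.mp hPS
    by_cases hwu : w = u
    · exact ⟨A, .refl, by rw [hwu, insert_erase hu]⟩
    · have hwA : w ∉ A := fun h => hw (mem_erase.mpr ⟨hwu, h⟩)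
      exact ⟨_, .single ⟨tjStep_insert_erase hu hwA, hXA, hXw⟩, .refl⟩
  | @tail Q P hAQ hQP ih =>
    rintro S w ⟨hPS, hXP, -⟩ hw hXw
    obtain ⟨u, hu, rfl⟩ := trStep_iff.mp hPS
    by_cases hwu : w = u
    · exact ⟨A, .refl, by rw [hwu, insert_erase hu]; exact hAQ.tail hQP⟩
    have hwP : w ∉ P := fun h => hw (mem_erase.mpr ⟨hwu, h⟩)
    by_cases huw : G.Adj u w
    · obtain ⟨hu', hw'⟩ := hXP.isolatedEdge_of_exchange hXw hu hwP huw
      obtain ⟨v, hv, rfl⟩ := trStep_iff.mp hQP.1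
      have hXQ := hQP.2.1
      have huQ := mem_of_mem_erase hu
      have hcomm : (Q.erase v).erase u = (Q.erase u).erase v := erase_right_comm
      by_cases hwv : w = v
      · subst hwv
        have hwQu : w ∈ Q.erase u := mem_erase.mpr ⟨hwu, hv⟩
        rw [hcomm, insert_erase hwQu] at hXw ⊢
        exact ⟨A, .refl, hAQ.tail ⟨trStep_erase huQ, hXQ, hXw⟩⟩
      · -- swap the removals of `v` and `u`: `Q - u` is an alliance since `uw` is an isolated edge
        have hE := hXQ.erase_of_isolatedEdge huQ hu' hw'
        have hvE : v ∈ Q.erase u := mem_erase.mpr ⟨Ne.symm (ne_of_mem_erase hu), hv⟩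
        have hwE : w ∉ Q.erase u := fun h => hwP (mem_erase.mpr ⟨hwv, mem_of_mem_erase h⟩)
        have hvw : ¬ G.Adj v w := fun h => ne_of_mem_erase hvE (hw' v h.symm)
        rw [hcomm] at hXw ⊢
        have hEw := hE.insert_of_exchange hXw hvw
        obtain ⟨A', hAA', hA'E⟩ := ih ⟨trStep_erase huQ, hXQ, hE⟩ hwE hEw
        exact ⟨A', hAA', hA'E.tail ⟨trStep_insert_erase hvE hwv, hEw, hXw⟩⟩
    · have hPw := hXP.insert_of_exchange hXw huw
      obtain ⟨A', hAA', hA'P⟩ := ih hQP hwP hPw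
      exact ⟨A', hAA', hA'P.tail ⟨trStep_insert_erase hu hwu, hPw, hXw⟩⟩

lemma exists_tj_removals_or_taStep_of_tar {A B : Finset V} (hXA : IndOffAll G A) (hA : A.card = k)
    (h : ReflTransGen (StepWithin TARStep (IndOffAllUpTo G (k + 1))) A B) :
    ∃ C, ReflTransGen (StepWithin TJStep (IndOffAll G)) A C ∧
      (ReflTransGen (StepWithin TRStep (IndOffAll G)) C B ∨ TAStep C B) := by
  induction h with
  | refl => exact ⟨A, .refl, Or.inl .refl⟩
  | @tail S T _ hST ih =>
    obtain ⟨C, hAC, hCS⟩ := ih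
    have hC : C.card = k := (card_eq_of_reflTransGen_tjStep hAC).trans hA
    obtain ⟨hST, ⟨hXS, -⟩, hXT, hTk⟩ := hST
    rcases hCS with hCS | hCS <;> rcases hST with hST | hST
    · obtain ⟨w, hw, rfl⟩ := taStep_iff.mp hST
      rcases hCS.cases_tail with rfl | ⟨P, hCP, hPS⟩
      · exact ⟨S, hAC, Or.inr (taStep_insert hw)⟩
      · obtain ⟨A', hCA', hA'T⟩ := exists_tj_removals_to_insert hCP hPS hw hXT
        exact ⟨A', hAC.trans hCA', Or.inl hA'T⟩
    · exact ⟨C, hAC, Or.inl (hCS.tail ⟨hST, hXS, hXT⟩)⟩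
    · have := hCS.card_eq
      have := hST.card_eq
      omega
    · obtain ⟨w, hw, rfl⟩ := taStep_iff.mp hCS
      obtain ⟨x, hx, rfl⟩ := trStep_iff.mp hST
      by_cases hxw : x = w
      · subst hxw
        exact ⟨C, hAC, Or.inl (by rw [erase_insert hw])⟩
      · have hxC := (mem_insert.mp hx).resolve_left hxw
        have hXC := StepWithin.of_reflTransGen hAC hXA
        rw [erase_insert_of_ne (Ne.symm hxw)] at hXT ⊢
        exact ⟨_, hAC.tail ⟨tjStep_insert_erase hxC hw, hXC, hXT⟩, Or.inl .refl⟩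

lemma reflTransGen_tj_of_reflTransGen_tar {A B : Finset V} (hXA : IndOffAll G A)
    (hA : A.card = k) (hB : B.card = k)
    (h : ReflTransGen (StepWithin TARStep (IndOffAllUpTo G (k + 1))) A B) :
    ReflTransGen (StepWithin TJStep (IndOffAll G)) A B := by
  obtain ⟨C, hAC, hCB | hCB⟩ := exists_tj_removals_or_taStep_of_tar hXA hA h
  · have hC : C.card = k := (card_eq_of_reflTransGen_tjStep hAC).trans hA
    rwa [← eq_of_subset_of_card_le (subset_of_reflTransGen_trStep hCB) (by omega)] at hAC
  · have := hCB.card_eq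
    have := card_eq_of_reflTransGen_tjStep hAC
    omega

end Reconfiguration

theorem stmt_8_general {V : Type*} [Fintype V] [DecidableEq V]
    (G : SimpleGraph V) [DecidableRel G.Adj]
    (A_s A_t : Finset V) (k : ℕ)
    (hks : A_s.card = k) (hkt : A_t.card = k) :
    (∃ n, IsSeq TJStep (fun S => OffAll G S ∧ IndSet G S) A_s A_t n) ↔
      (∃ n, IsSeq TARStep
        (fun S => (OffAll G S ∧ IndSet G S) ∧ S.card ≤ k + 1) A_s A_t n) := by
  rw [isSeq_iff_reflTransGen, isSeq_iff_reflTransGen]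
  constructor
  · rintro ⟨hXs, h⟩
    exact ⟨⟨hXs, by omega⟩, reflTransGen_tar_of_reflTransGen_tj hks h⟩
  · rintro ⟨⟨hXs, -⟩, h⟩
    exact ⟨hXs, reflTransGen_tj_of_reflTransGen_tar hXs hks hkt h⟩

theorem stmt_8 {V : Type*} [Fintype V] [DecidableEq V]
    (G : SimpleGraph V) [DecidableRel G.Adj]
    (A_s A_t : Finset V) (k : ℕ)
    (hsoff : OffAll G A_s) (hsind : IndSet G A_s)
    (htoff : OffAll G A_t) (htind : IndSet G A_t)
    (hks : A_s.card = k) (hkt : A_t.card = k) :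
    (∃ n, IsSeq TJStep (fun S => OffAll G S ∧ IndSet G S) A_s A_t n) ↔
      (∃ n, IsSeq TARStep
        (fun S => (OffAll G S ∧ IndSet G S) ∧ S.card ≤ k + 1) A_s A_t n) :=
  stmt_8_general G A_s A_t k hks hkt
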